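/- arXiv:1905.07126 — 2 statements merged into one kernel-verified Lean document; each statement's English description precedes it below -/
import Mathlib

section
/- Let ξ = ((m_1,n_1),(m_2,n_2)) be a Newton polygon with two segments such that n_1 m_2 > m_1 n_2 (first slope strictly larger) and n_2 ≥ m_2 (second slope ≥ 1/2), and let ξ^C = ((m_1,n_1−m_1),(m_2,n_2−m_2)) be its curtailment (again a Newton polygon). Let i, j satisfy m_1 < i ≤ n_1 and 1 ≤ j ≤ m_2, and consider u = (1,i), v = (2,j), which lie both in T(ξ^C) and, via the inclusion φ(r,l) = (r,l), in T(ξ). Suppose u < v in T(ξ). Then there exists a generic specialization of S(ξ) by (u,v) if and only if there exists a generic specialization of S(ξ^C) by (u,v). -/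
open scoped Classical

noncomputable section

/-- Symbols `(r, i)` (1-indexed component `r`, 1-indexed position `i`). -/
abbrev Symb : Type := ℕ × ℕ

/-- A Newton polygon: a finite list of coprime pairs `(m_r, n_r)` with `m_r + n_r > 0`
and weakly decreasing slopes `n_r / (m_r + n_r)`. -/
structure NewtonPolygon where
  seg : List (ℕ × ℕ)
  coprime : ∀ p ∈ seg, Nat.Coprime p.1 p.2
  pos : ∀ p ∈ seg, 0 < p.1 + p.2
  slopes : ∀ r q : Fin seg.length, r ≤ q →
    ((seg.get q).2 : ℚ) / (((seg.get q).1 : ℚ) + ((seg.get q).2 : ℚ)) ≤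
      ((seg.get r).2 : ℚ) / (((seg.get r).1 : ℚ) + ((seg.get r).2 : ℚ))

namespace NewtonPolygon

/-- The number `z` of segments. -/
def z (ξ : NewtonPolygon) : ℕ := ξ.seg.length

/-- `m_r` (1-indexed). -/
def m (ξ : NewtonPolygon) (r : ℕ) : ℕ := (ξ.seg.getD (r - 1) (0, 0)).1

/-- `n_r` (1-indexed). -/
def n (ξ : NewtonPolygon) (r : ℕ) : ℕ := (ξ.seg.getD (r - 1) (0, 0)).2

/-- `h_r = m_r + n_r`. -/
def h (ξ : NewtonPolygon) (r : ℕ) : ℕ := ξ.m r + ξ.n r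

/-- Membership in the symbol set `T(ξ) = {(r,i) : 1 ≤ r ≤ z, 1 ≤ i ≤ h_r}`. -/
def mem (ξ : NewtonPolygon) (t : Symb) : Prop :=
  1 ≤ t.1 ∧ t.1 ≤ ξ.z ∧ 1 ≤ t.2 ∧ t.2 ≤ ξ.h t.1

/-- The symbol set `T(ξ)` as a finset. -/
def Tfin (ξ : NewtonPolygon) : Finset Symb :=
  ((Finset.Icc 1 ξ.z) ×ˢ (Finset.Icc 1 (ξ.seg.foldr (fun p s => p.1 + p.2 + s) 0))).filter
    (fun t => t.2 ≤ ξ.h t.1)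

/-- The map `δ : T(ξ) → {0,1}`; `δ(r,i) = 1` iff `i ≤ m_r`. -/
def dlt (ξ : NewtonPolygon) (t : Symb) : ℕ := if t.2 ≤ ξ.m t.1 then 1 else 0

/-- The bijection `π(r, i) = (r, ((i - m_r - 1) mod h_r) + 1)`. -/
def pmap (ξ : NewtonPolygon) (t : Symb) : Symb :=
  (t.1, (((t.2 : ℤ) - (ξ.m t.1 : ℤ) - 1) % ((ξ.h t.1 : ℤ))).toNat + 1)

/-- The inverse of `π`: `π⁻¹(r, i) = (r, ((i + m_r - 1) mod h_r) + 1)`. -/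
def pinv (ξ : NewtonPolygon) (t : Symb) : Symb :=
  (t.1, (((t.2 : ℤ) + (ξ.m t.1 : ℤ) - 1) % ((ξ.h t.1 : ℤ))).toNat + 1)

/-- Binary expansion `b(t) = ∑_{k ≥ 1} δ(π^{-k}(t)) · 2^{-k}`. -/
def bexp (ξ : NewtonPolygon) (t : Symb) : ℝ :=
  ∑' k : ℕ, (ξ.dlt (ξ.pinv^[k + 1] t) : ℝ) / 2 ^ (k + 1)

/-- The linear order on `T(ξ)`: `t < t'` iff `b(t) < b(t')`, or `b(t) = b(t')` and
`t` is in an earlier component. -/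
def slt (ξ : NewtonPolygon) (t t' : Symb) : Prop :=
  ξ.bexp t < ξ.bexp t' ∨ (ξ.bexp t = ξ.bexp t' ∧ t.1 < t'.1)

/-- The length `ℓ(ξ)`: the number of pairs `t < t'` with `δ(t) = 0` and `δ(t') = 1`. -/
def len (ξ : NewtonPolygon) : ℕ :=
  ((ξ.Tfin ×ˢ ξ.Tfin).filter (fun p => ξ.slt p.1 p.2 ∧ ξ.dlt p.1 = 0 ∧ ξ.dlt p.2 = 1)).card

/-- `π' = τ ∘ π`, the permutation of the small modification by `(u, v)`. -/
def pmod (ξ : NewtonPolygon) (u v : Symb) (t : Symb) : Symb := Equiv.swap u v (ξ.pmap t)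

/-- The inverse of `π'`. -/
def pmodInv (ξ : NewtonPolygon) (u v : Symb) (t : Symb) : Symb := ξ.pinv (Equiv.swap u v t)

/-- `b'(t) = ∑_{k ≥ 1} δ(π'^{-k}(t)) · 2^{-k}` of the small modification by `(u, v)`. -/
def bmod (ξ : NewtonPolygon) (u v : Symb) (t : Symb) : ℝ :=
  ∑' k : ℕ, (ξ.dlt ((ξ.pmodInv u v)^[k + 1] t) : ℝ) / 2 ^ (k + 1)

/-- The order of the small modification by `(u, v)`: the order of `S(ξ)` with the
positions of `u` and `v` exchanged. -/
def lt0 (ξ : NewtonPolygon) (u v : Symb) (t t' : Symb) : Prop :=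
  ξ.slt (Equiv.swap u v t) (Equiv.swap u v t')

/-- `R` is a specialization of `S(ξ)` by `(u, v)`: a strict linear order on `T(ξ)`
such that `t ≺ t'` implies `b'(t) ≤ b'(t')`. -/
def IsSpec (ξ : NewtonPolygon) (u v : Symb) (R : Symb → Symb → Prop) : Prop :=
  (∀ t ∈ ξ.Tfin, ¬ R t t) ∧
  (∀ t ∈ ξ.Tfin, ∀ t' ∈ ξ.Tfin, ∀ t'' ∈ ξ.Tfin, R t t' → R t' t'' → R t t'') ∧
  (∀ t ∈ ξ.Tfin, ∀ t' ∈ ξ.Tfin, t ≠ t' → R t t' ∨ R t' t) ∧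
  (∀ t ∈ ξ.Tfin, ∀ t' ∈ ξ.Tfin, R t t' → ξ.bmod u v t ≤ ξ.bmod u v t')

/-- The length `ℓ(≺)` of an order `R`: the number of pairs `t ≺ t'` in `T(ξ)` with
`δ(t) = 0` and `δ(t') = 1`. -/
def lenR (ξ : NewtonPolygon) (R : Symb → Symb → Prop) : ℕ :=
  ((ξ.Tfin ×ˢ ξ.Tfin).filter (fun p => R p.1 p.2 ∧ ξ.dlt p.1 = 0 ∧ ξ.dlt p.2 = 1)).card

/-- There exists a generic specialization of `S(ξ)` by `(u, v)`. -/
def ExGeneric (ξ : NewtonPolygon) (u v : Symb) : Prop :=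
  ∃ R : Symb → Symb → Prop, ξ.IsSpec u v R ∧ (ξ.lenR R : ℤ) = (ξ.len : ℤ) - 1

/-- `α_k = π'^k(u)`. -/
def alpha (ξ : NewtonPolygon) (u v : Symb) (k : ℕ) : Symb := (ξ.pmod u v)^[k] u

/-- `β_k = π'^k(v)`. -/
def beta (ξ : NewtonPolygon) (u v : Symb) (k : ℕ) : Symb := (ξ.pmod u v)^[k] v

/-- The set `A_k` computed with respect to an order `R`. -/
def AsetOf (ξ : NewtonPolygon) (u v : Symb) (R : Symb → Symb → Prop) (k : ℕ) : Finset Symb :=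
  ξ.Tfin.filter (fun t =>
    (if k = 0 then ξ.dlt t = 0 else t.1 ≠ v.1 ∧ ξ.dlt t = ξ.dlt (ξ.alpha u v k)) ∧
    R t (ξ.alpha u v k) ∧ R (ξ.alpha u v (k + 1)) (ξ.pmod u v t))

/-- The maximum of a finset for an order `R`. -/
def maxOf (R : Symb → Symb → Prop) (s : Finset Symb) : Symb :=
  if hmax : ∃ t, t ∈ s ∧ ∀ t' ∈ s, t' ≠ t → R t' t then hmax.choose else (0, 0)

/-- The minimum of a finset for an order `R`. -/
def minOf (R : Symb → Symb → Prop) (s : Finset Symb) : Symb :=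
  if hmin : ∃ t, t ∈ s ∧ ∀ t' ∈ s, t' ≠ t → R t t' then hmin.choose else (0, 0)

/-- The pairs `(t, t')` reversed in a step of Construction A: `t = α_k` and
`α_k <_{k-1} t' ≤_{k-1} w` where `w = π'(t_max)`. -/
def revA (R : Symb → Symb → Prop) (a w : Symb) (t t' : Symb) : Prop :=
  t = a ∧ R t t' ∧ (R t' w ∨ t' = w)

/-- One step of Construction A. -/
def stepA (R : Symb → Symb → Prop) (a w : Symb) : Symb → Symb → Prop :=
  fun t t' => (R t t' ∧ ¬ revA R a w t t') ∨ revA R a w t' t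

/-- The pairs `(t, t')` reversed in a step of Construction B: `t' = β_k` and
`w ≤_{k-1} t <_{k-1} β_k` where `w = π'(t_min)`. -/
def revB (R : Symb → Symb → Prop) (b w : Symb) (t t' : Symb) : Prop :=
  t' = b ∧ R t t' ∧ (R w t ∨ t = w)

/-- One step of Construction B. -/
def stepB (R : Symb → Symb → Prop) (b w : Symb) : Symb → Symb → Prop :=
  fun t t' => (R t t' ∧ ¬ revB R b w t t') ∨ revB R b w t' t

/-- The order `<_k` of Construction A (for `k ≥ 1`, meaningful when `A_{k-1} ≠ ∅`). -/
def ordA (ξ : NewtonPolygon) (u v : Symb) : ℕ → Symb → Symb → Prop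
  | 0 => ξ.lt0 u v
  | k + 1 =>
      stepA (ordA ξ u v k) (ξ.alpha u v (k + 1))
        (ξ.pmod u v (maxOf (ordA ξ u v k) (ξ.AsetOf u v (ordA ξ u v k) k)))

/-- The set `A_k` of Construction A. -/
def Aset (ξ : NewtonPolygon) (u v : Symb) (k : ℕ) : Finset Symb :=
  ξ.AsetOf u v (ordA ξ u v k) k

/-- The set `B_k` computed with respect to an order `R`. -/
def BsetOf (ξ : NewtonPolygon) (u v : Symb) (R : Symb → Symb → Prop) (k : ℕ) : Finset Symb :=
  ξ.Tfin.filter (fun t =>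
    (if k = 0 then ξ.dlt t = 1 else ξ.dlt t = ξ.dlt (ξ.beta u v k)) ∧
    R (ξ.beta u v k) t ∧ R (ξ.pmod u v t) (ξ.beta u v (k + 1)))

/-- The order `<_{a+k}` of Construction B (for `k ≥ 1`, meaningful when `B_{k-1} ≠ ∅`). -/
def ordB (ξ : NewtonPolygon) (u v : Symb) (a : ℕ) : ℕ → Symb → Symb → Prop
  | 0 => ordA ξ u v a
  | k + 1 =>
      stepB (ordB ξ u v a k) (ξ.beta u v (k + 1))
        (ξ.pmod u v (minOf (ordB ξ u v a k) (ξ.BsetOf u v (ordB ξ u v a k) k)))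

/-- The set `B_k` of Construction B. -/
def Bset (ξ : NewtonPolygon) (u v : Symb) (a k : ℕ) : Finset Symb :=
  ξ.BsetOf u v (ordB ξ u v a k) k

end NewtonPolygon

/-!
Curtailment removes from the `r`-th cycle of `π` the `m_r` extra symbols `(r, i)` with
`n_r < i ≤ h_r`. They have `δ = 0`, and `π⁻¹` sends each of them to a symbol with `δ = 1`.
Hence, for a symbol `t` of `ξ^C` and a permutation `w` fixing the extra symbols (the identity,
or the transposition `τ` of `u` and `v`), the digits of `b(t)` computed along `π⁻¹ ∘ w` in `ξ`
arise from those in `ξ^C` by the substitution `0 ↦ 0, 1 ↦ 01`. This substitution preserves the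
lexicographic order, which on periodic digit sequences is the order of the values; so `ξ` and
`ξ^C` order the symbols of `ξ^C` alike, both in `S` and in the small modification. The digits of
an extra symbol start with `1`, so extra symbols lie above all others and never count in a
length. Thus `ℓ(ξ) = ℓ(ξ^C)`, a generic specialization of `S(ξ)` restricts to one of `S(ξ^C)`,
and one of `S(ξ^C)` extends to one of `S(ξ)` by putting the extra symbols on top.
-/

open Function

lemma Set.MapsTo.exists_iterate_eq_self {α : Type*} {g : α → α} {s : Set α} (hs : s.Finite)
    (hmaps : Set.MapsTo g s s) (hinj : Set.InjOn g s) {x : α} (hx : x ∈ s) :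
    ∃ P, 0 < P ∧ g^[P] x = x := by
  have : Finite s := hs
  obtain ⟨P, hP, hper⟩ := mem_periodicPts.1 ((hmaps.restrict_inj.2 hinj).mem_periodicPts ⟨x, hx⟩)
  exact ⟨P, hP, by simpa [hmaps.coe_iterate_restrict] using congrArg Subtype.val hper⟩

lemma Equiv.Perm.apply_mem_of_fixed_outside {α : Type*} {p : α → Prop} {w : Equiv.Perm α}
    (hw : ∀ a, ¬ p a → w a = a) {a : α} (ha : p a) : p (w a) := by
  by_contra h
  exact h (by rw [w.injective (hw _ h)]; exact ha)

lemma Equiv.swap_apply_of_not_mem {α : Type*} [DecidableEq α] {p : α → Prop} {u v t : α}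
    (hu : p u) (hv : p v) (ht : ¬ p t) : Equiv.swap u v t = t :=
  Equiv.swap_apply_of_ne_of_ne (fun h => ht (h ▸ hu)) (fun h => ht (h ▸ hv))

section BinarySequences

noncomputable def binVal (c : ℕ → ℕ) : ℝ := ∑' k, (c k : ℝ) / 2 ^ (k + 1)

def IsBinary (c : ℕ → ℕ) : Prop := ∀ k, c k ≤ 1

def IsPeriodicBinary (c : ℕ → ℕ) : Prop := IsBinary c ∧ ∃ P, 0 < P ∧ Periodic c P

variable {c c' : ℕ → ℕ}

lemma binVal_term_le (hc : IsBinary c) (k : ℕ) : (c k : ℝ) / 2 ^ (k + 1) ≤ 1 / 2 / 2 ^ k := by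
  rw [div_div, ← pow_succ']
  gcongr
  exact_mod_cast hc k

lemma summable_binVal (hc : IsBinary c) : Summable fun k => (c k : ℝ) / 2 ^ (k + 1) :=
  .of_nonneg_of_le (fun k => by positivity) (binVal_term_le hc) (summable_geometric_two' 1)

lemma binVal_le_one (hc : IsBinary c) : binVal c ≤ 1 :=
  ((summable_binVal hc).tsum_le_tsum (binVal_term_le hc) (summable_geometric_two' 1)).trans_eq
    (tsum_geometric_two' 1)

lemma binVal_pos (hc : IsBinary c) {q : ℕ} (hq : c q = 1) : 0 < binVal c :=
  (summable_binVal hc).tsum_pos (fun k => by positivity) q (by rw [hq]; positivity)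

lemma binVal_eq_sum_add (hc : IsBinary c) (n : ℕ) :
    binVal c = ∑ k ∈ Finset.range n, (c k : ℝ) / 2 ^ (k + 1) +
      binVal (fun k => c (k + n)) / 2 ^ n := by
  rw [binVal, ← (summable_binVal hc).sum_add_tsum_nat_add n, binVal, ← tsum_div_const]
  congr 2 with k
  rw [div_div, ← pow_add]
  ring_nf

lemma binVal_lt_binVal (hc : IsBinary c) (hc' : IsBinary c') {p q : ℕ}
    (hpre : ∀ k < p, c k = c' k) (hp : c p = 0) (hp' : c' p = 1) (hpq : p < q) (hq : c' q = 1) :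
    binVal c < binVal c' := by
  have hhead : ∑ k ∈ Finset.range p, (c k : ℝ) / 2 ^ (k + 1) =
      ∑ k ∈ Finset.range p, (c' k : ℝ) / 2 ^ (k + 1) :=
    Finset.sum_congr rfl fun k hk => by rw [hpre k (Finset.mem_range.1 hk)]
  have htail : binVal (fun k => c (k + (p + 1))) ≤ 1 := binVal_le_one fun k => hc _
  have htail' : 0 < binVal (fun k => c' (k + (p + 1))) :=
    binVal_pos (fun k => hc' _) (q := q - (p + 1)) (by rw [Nat.sub_add_cancel hpq]; exact hq)
  rw [binVal_eq_sum_add hc (p + 1), binVal_eq_sum_add hc' (p + 1), Finset.sum_range_succ,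
    Finset.sum_range_succ, hhead, hp, hp', pow_succ]
  push_cast
  rw [add_assoc, add_assoc, add_lt_add_iff_left, ← add_div, ← add_div]
  exact div_lt_div_of_pos_right (by linarith) (by positivity)

lemma binVal_strictMonoOn :
    StrictMonoOn (fun x : Lex (ℕ → ℕ) => binVal (ofLex x)) {x | IsPeriodicBinary (ofLex x)} := by
  rintro x ⟨hx, -⟩ y ⟨hy, P, hP, hper⟩ ⟨p, hpre, hlt : ofLex x p < ofLex y p⟩
  have hxp := hx p
  have hyp := hy p
  exact binVal_lt_binVal hx hy hpre (by omega) (by omega) (Nat.lt_add_of_pos_right hP)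
    (by rw [hper]; omega)

lemma binVal_lt_binVal_iff (hc : IsPeriodicBinary c) (hc' : IsPeriodicBinary c') :
    binVal c < binVal c' ↔ toLex c < toLex c' :=
  binVal_strictMonoOn.lt_iff_lt (a := toLex c) (b := toLex c') hc hc'

lemma binVal_eq_binVal_iff (hc : IsPeriodicBinary c) (hc' : IsPeriodicBinary c') :
    binVal c = binVal c' ↔ c = c' :=
  (binVal_strictMonoOn.injOn.eq_iff (x := toLex c) (y := toLex c') hc hc').trans
    toLex_inj

def blockStart (c : ℕ → ℕ) (k : ℕ) : ℕ := k + ∑ j ∈ Finset.range k, c j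

/-- The substitution `0 ↦ 0, 1 ↦ 01`; the image of `c k` starts at `blockStart c k`. -/
def subst01 (c : ℕ → ℕ) (K : ℕ) : ℕ := if ∃ k, c k = 1 ∧ blockStart c k + 1 = K then 1 else 0

lemma blockStart_zero : blockStart c 0 = 0 := rfl

lemma blockStart_succ (k : ℕ) : blockStart c (k + 1) = blockStart c k + 1 + c k := by
  simp only [blockStart, Finset.sum_range_succ]
  ring

lemma blockStart_strictMono (c : ℕ → ℕ) : StrictMono (blockStart c) :=
  strictMono_nat_of_lt_succ fun k => by rw [blockStart_succ]; omega

lemma blockStart_congr {p : ℕ} (hpre : ∀ k < p, c k = c' k) :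
    blockStart c p = blockStart c' p := by
  simp only [blockStart]
  rw [Finset.sum_congr rfl fun k hk => hpre k (Finset.mem_range.1 hk)]

lemma exists_blockStart_le_lt (c : ℕ → ℕ) (K : ℕ) :
    ∃ k, blockStart c k ≤ K ∧ K < blockStart c (k + 1) := by
  induction K with
  | zero => exact ⟨0, le_rfl, blockStart_strictMono c (Nat.lt_succ_self 0)⟩
  | succ K ih =>
    obtain ⟨k, hk, hK⟩ := ih
    rcases (Nat.succ_le_of_lt hK).lt_or_eq with h | h
    · exact ⟨k, by omega, h⟩
    · refine ⟨k + 1, h.ge, ?_⟩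
      rw [show K + 1 = _ from h]
      exact blockStart_strictMono c (Nat.lt_succ_self _)

lemma subst01_blockStart (k : ℕ) : subst01 c (blockStart c k) = 0 := by
  rw [subst01, if_neg]
  rintro ⟨j, hj, hjk⟩
  have hlt : j < k := (blockStart_strictMono c).lt_iff_lt.1 (by omega)
  have := (blockStart_strictMono c).monotone (Nat.succ_le_of_lt hlt)
  rw [blockStart_succ, hj] at this
  omega

lemma subst01_blockStart_add_one {k : ℕ} (hk : c k = 1) :
    subst01 c (blockStart c k + 1) = 1 :=
  if_pos ⟨k, hk, rfl⟩ |>.trans rfl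

lemma eq_subst01 (hc : IsBinary c) {x : ℕ → ℕ} (hx0 : ∀ k, x (blockStart c k) = 0)
    (hx1 : ∀ k, c k = 1 → x (blockStart c k + 1) = 1) : x = subst01 c := by
  funext K
  obtain ⟨k, hk, hK⟩ := exists_blockStart_le_lt c K
  rw [blockStart_succ] at hK
  rcases hk.eq_or_lt with rfl | hlt
  · rw [hx0, subst01_blockStart]
  · have hck : c k = 1 := by have := hc k; omega
    obtain rfl : K = blockStart c k + 1 := by omega
    rw [hx1 k hck, subst01_blockStart_add_one hck]

lemma subst01_congr {p : ℕ} (hpre : ∀ k < p, c k = c' k) {K : ℕ} (hK : K ≤ blockStart c p) :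
    subst01 c K = subst01 c' K := by
  have key : ∀ {c c' : ℕ → ℕ}, (∀ k < p, c k = c' k) → K ≤ blockStart c p →
      (∃ k, c k = 1 ∧ blockStart c k + 1 = K) → ∃ k, c' k = 1 ∧ blockStart c' k + 1 = K := by
    rintro c c' hpre hK ⟨k, hk, rfl⟩
    have hkp : k < p := (blockStart_strictMono c).lt_iff_lt.1 (by omega)
    exact ⟨k, hpre k hkp ▸ hk, by rw [blockStart_congr fun j hj => (hpre j (hj.trans hkp)).symm]⟩
  have hK' : K ≤ blockStart c' p := blockStart_congr hpre ▸ hK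
  simp only [subst01]
  exact if_congr ⟨key hpre hK, key (fun k hk => (hpre k hk).symm) hK'⟩ rfl rfl

lemma subst01_strictMonoOn :
    StrictMonoOn (fun x : Lex (ℕ → ℕ) => toLex (subst01 (ofLex x))) {x | IsBinary (ofLex x)} := by
  rintro x hx y hy ⟨p, hpre, hlt : ofLex x p < ofLex y p⟩
  replace hpre : ∀ k < p, ofLex x k = ofLex y k := hpre
  have hxp := hx p
  have hyp := hy p
  have hx0 : ofLex x p = 0 := by omega
  have hy1 : ofLex y p = 1 := by omega
  refine ⟨blockStart (ofLex x) p + 1, fun K hK => subst01_congr hpre (by omega), ?_⟩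
  have hnext : blockStart (ofLex x) p + 1 = blockStart (ofLex x) (p + 1) := by
    rw [blockStart_succ, hx0]
  show subst01 (ofLex x) _ < subst01 (ofLex y) _
  rw [hnext, subst01_blockStart, ← hnext, blockStart_congr hpre,
    subst01_blockStart_add_one hy1]
  exact Nat.one_pos

lemma subst01_lt_subst01_iff (hc : IsBinary c) (hc' : IsBinary c') :
    toLex (subst01 c) < toLex (subst01 c') ↔ toLex c < toLex c' :=
  subst01_strictMonoOn.lt_iff_lt (a := toLex c) (b := toLex c') hc hc'

lemma subst01_inj (hc : IsBinary c) (hc' : IsBinary c') : subst01 c = subst01 c' ↔ c = c' :=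
  (subst01_strictMonoOn.injOn.eq_iff (x := toLex c) (y := toLex c') hc hc').trans toLex_inj

end BinarySequences

namespace NewtonPolygon

lemma getD_le_foldr (l : List (ℕ × ℕ)) (i : ℕ) :
    (l.getD i (0, 0)).1 + (l.getD i (0, 0)).2 ≤ l.foldr (fun p s => p.1 + p.2 + s) 0 := by
  induction l generalizing i with
  | nil => simp
  | cons a l ih =>
    cases i with
    | zero => simp
    | succ i => simpa using (ih i).trans (Nat.le_add_left _ _)

variable (ξ : NewtonPolygon)

lemma mem_Tfin {t : Symb} : t ∈ ξ.Tfin ↔ ξ.mem t := by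
  have : ξ.h t.1 ≤ ξ.seg.foldr (fun p s => p.1 + p.2 + s) 0 := getD_le_foldr _ _
  simp only [Tfin, mem, Finset.mem_filter, Finset.mem_product, Finset.mem_Icc]
  omega

lemma h_pos {r : ℕ} (hr : 1 ≤ r) (hrz : r ≤ ξ.z) : 0 < ξ.h r := by
  have hlt : r - 1 < ξ.seg.length := by rw [z] at hrz; omega
  have := ξ.pos _ (List.getElem_mem hlt)
  rw [h, m, n, List.getD_eq_getElem _ _ hlt]
  omega

lemma pinv_apply {t : Symb} (ht : 1 ≤ t.2) :
    ξ.pinv t = (t.1, (t.2 + ξ.m t.1 - 1) % ξ.h t.1 + 1) := by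
  have : (t.2 : ℤ) + ξ.m t.1 - 1 = ((t.2 + ξ.m t.1 - 1 : ℕ) : ℤ) := by
    rw [Nat.cast_sub (by omega)]; push_cast; ring
  rw [pinv, this, ← Int.natCast_mod, Int.toNat_natCast]

lemma mem_pinv {t : Symb} (ht : ξ.mem t) : ξ.mem (ξ.pinv t) := by
  obtain ⟨h1, hz, h2, hh⟩ := ht
  have := Nat.mod_lt (t.2 + ξ.m t.1 - 1) (ξ.h_pos h1 hz)
  rw [pinv_apply ξ h2]
  refine ⟨h1, hz, ?_, ?_⟩ <;> dsimp only <;> omega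

lemma pinv_injOn : Set.InjOn ξ.pinv {t | ξ.mem t} := by
  rintro ⟨r, a⟩ ⟨h1, hz, ha, hah⟩ ⟨r', b⟩ ⟨-, -, hb, hbh⟩ heq
  rw [pinv_apply ξ ha, pinv_apply ξ hb, Prod.mk.injEq] at heq
  obtain ⟨rfl, heq⟩ := heq
  dsimp only at *
  have hmod : a - 1 ≡ b - 1 [MOD ξ.h r] := by
    refine Nat.ModEq.add_right_cancel' (ξ.m r) ?_
    rw [← Nat.sub_add_comm ha, ← Nat.sub_add_comm hb]
    exact Nat.succ_injective heq
  have := hmod.eq_of_lt_of_lt (by omega) (by omega)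
  congr 1
  omega

lemma dlt_le_one (t : Symb) : ξ.dlt t ≤ 1 := by
  unfold dlt
  split <;> omega

def orbitDigits (g : Symb → Symb) (t : Symb) (k : ℕ) : ℕ := ξ.dlt (g^[k + 1] t)

/-- For `w = 1` this is `π⁻¹`; for `w = τ` it is `π'⁻¹`. -/
def twistedPinv (w : Equiv.Perm Symb) (t : Symb) : Symb := ξ.pinv (w t)

def twistedVal (w : Equiv.Perm Symb) (t : Symb) : ℝ := binVal (ξ.orbitDigits (ξ.twistedPinv w) t)

lemma bexp_eq_twistedVal : ξ.bexp = ξ.twistedVal 1 := rfl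

lemma bmod_eq_twistedVal (u v : Symb) : ξ.bmod u v = ξ.twistedVal (Equiv.swap u v) := rfl

lemma mapsTo_twistedPinv {w : Equiv.Perm Symb} (hw : ∀ t, ¬ ξ.mem t → w t = t) :
    Set.MapsTo (ξ.twistedPinv w) {s | ξ.mem s} {s | ξ.mem s} :=
  fun _ hs => ξ.mem_pinv (Equiv.Perm.apply_mem_of_fixed_outside hw hs)

lemma isPeriodicBinary_orbitDigits {w : Equiv.Perm Symb} (hw : ∀ t, ¬ ξ.mem t → w t = t)
    {t : Symb} (ht : ξ.mem t) : IsPeriodicBinary (ξ.orbitDigits (ξ.twistedPinv w) t) := by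
  have hfin : {s | ξ.mem s}.Finite :=
    ξ.Tfin.finite_toSet.subset fun s hs => ξ.mem_Tfin.2 hs
  have hinj : Set.InjOn (ξ.twistedPinv w) {s | ξ.mem s} := fun s hs s' hs' h =>
    w.injective (ξ.pinv_injOn (Equiv.Perm.apply_mem_of_fixed_outside hw hs)
      (Equiv.Perm.apply_mem_of_fixed_outside hw hs') h)
  obtain ⟨P, hP, hper⟩ := (ξ.mapsTo_twistedPinv hw).exists_iterate_eq_self hfin hinj ht
  refine ⟨fun k => ξ.dlt_le_one _, P, hP, fun k => ?_⟩
  simp only [orbitDigits, add_right_comm k P 1, iterate_add_apply, hper]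

lemma len_eq_lenR : ξ.len = ξ.lenR ξ.slt := rfl

lemma isSpec_lexRefine (u v : Symb) {R : Symb → Symb → Prop} (hirr : ∀ t ∈ ξ.Tfin, ¬ R t t)
    (htrans : ∀ t ∈ ξ.Tfin, ∀ t' ∈ ξ.Tfin, ∀ t'' ∈ ξ.Tfin, R t t' → R t' t'' → R t t'')
    (htot : ∀ t ∈ ξ.Tfin, ∀ t' ∈ ξ.Tfin, t ≠ t' → ξ.bmod u v t = ξ.bmod u v t' →
      R t t' ∨ R t' t) :
    ξ.IsSpec u v fun t t' => Prod.Lex (· < ·) R (ξ.bmod u v t, t) (ξ.bmod u v t', t') := by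
  simp only [Prod.lex_def]
  refine ⟨fun t ht h => ?_, fun t ht t' ht' t'' ht'' h h' => ?_, fun t ht t' ht' hne => ?_,
    fun t _ t' _ h => ?_⟩
  · rcases h with h | ⟨-, h⟩
    · exact lt_irrefl _ h
    · exact hirr t ht h
  · rcases h with h | ⟨he, h⟩ <;> rcases h' with h' | ⟨he', h'⟩
    · exact Or.inl (h.trans h')
    · exact Or.inl (he' ▸ h)
    · exact Or.inl (he ▸ h')
    · exact Or.inr ⟨he.trans he', htrans t ht t' ht' t'' ht'' h h'⟩
  · rcases lt_trichotomy (ξ.bmod u v t) (ξ.bmod u v t') with h | h | h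
    · exact Or.inl (Or.inl h)
    · rcases htot t ht t' ht' hne h with h' | h'
      · exact Or.inl (Or.inr ⟨h, h'⟩)
      · exact Or.inr (Or.inr ⟨h.symm, h'⟩)
    · exact Or.inr (Or.inl h)
  · rcases h with h | ⟨h, -⟩ <;> exact h.le

def extendRel (ξC : NewtonPolygon) (R : Symb → Symb → Prop) (t t' : Symb) : Prop :=
  (ξC.mem t ∧ ξC.mem t' ∧ R t t') ∨ (¬ ξC.mem t ∧ ¬ ξC.mem t' ∧ toLex t < toLex t')

def extension (ξC : NewtonPolygon) (u v : Symb) (R : Symb → Symb → Prop) (t t' : Symb) : Prop :=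
  Prod.Lex (· < ·) (extendRel ξC R) (ξ.bmod u v t, t) (ξ.bmod u v t', t')

end NewtonPolygon

structure NewtonPolygon.IsCurtailment (ξ ξC : NewtonPolygon) : Prop where
  le : ∀ p ∈ ξ.seg, p.1 ≤ p.2
  seg_eq : ξC.seg = ξ.seg.map fun p => (p.1, p.2 - p.1)

namespace NewtonPolygon.IsCurtailment

variable {ξ ξC : NewtonPolygon} (hC : ξ.IsCurtailment ξC)
include hC

lemma getD_seg (i : ℕ) :
    ξC.seg.getD i (0, 0) =
      ((ξ.seg.getD i (0, 0)).1, (ξ.seg.getD i (0, 0)).2 - (ξ.seg.getD i (0, 0)).1) := by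
  rw [hC.seg_eq]
  exact List.getD_map (l := ξ.seg) (d := (0, 0)) (fun p : ℕ × ℕ => (p.1, p.2 - p.1))

lemma z_eq : ξC.z = ξ.z := by
  rw [NewtonPolygon.z, NewtonPolygon.z, hC.seg_eq, List.length_map]

lemma m_eq (r : ℕ) : ξC.m r = ξ.m r := by
  rw [NewtonPolygon.m, hC.getD_seg, NewtonPolygon.m]

lemma m_le_n (r : ℕ) : ξ.m r ≤ ξ.n r := by
  rw [NewtonPolygon.m, NewtonPolygon.n]
  by_cases hr : r - 1 < ξ.seg.length
  · rw [List.getD_eq_getElem _ _ hr]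
    exact hC.le _ (List.getElem_mem hr)
  · rw [List.getD_eq_default _ _ (not_lt.1 hr)]

lemma h_eq (r : ℕ) : ξC.h r = ξ.n r := by
  have := hC.m_le_n r
  rw [NewtonPolygon.m, NewtonPolygon.n] at this
  rw [NewtonPolygon.h, NewtonPolygon.m, NewtonPolygon.n, hC.getD_seg, NewtonPolygon.n]
  omega

lemma dlt_eq : ξC.dlt = ξ.dlt := by
  funext t
  rw [NewtonPolygon.dlt, NewtonPolygon.dlt, hC.m_eq]

lemma mem_iff {t : Symb} : ξC.mem t ↔ ξ.mem t ∧ t.2 ≤ ξ.n t.1 := by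
  have := hC.m_le_n t.1
  rw [NewtonPolygon.mem, NewtonPolygon.mem, hC.z_eq, hC.h_eq, NewtonPolygon.h]
  omega

lemma mem_of_mem_curtailment {t : Symb} (ht : ξC.mem t) : ξ.mem t := (hC.mem_iff.1 ht).1

lemma mem_of_dlt_eq_one {t : Symb} (ht : ξ.mem t) (h1 : ξ.dlt t = 1) : ξC.mem t := by
  have := hC.m_le_n t.1
  refine hC.mem_iff.2 ⟨ht, ?_⟩
  rw [NewtonPolygon.dlt] at h1
  split at h1 <;> omega

lemma pinv_eq_pinv {s : Symb} (hs : ξC.mem s) (h : s.2 + ξ.m s.1 ≤ ξ.n s.1) :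
    ξ.pinv s = ξC.pinv s ∧ ξ.dlt (ξ.pinv s) = 0 := by
  obtain ⟨⟨-, -, h1, -⟩, -⟩ := hC.mem_iff.1 hs
  rw [ξ.pinv_apply h1, ξC.pinv_apply h1, hC.m_eq, hC.h_eq, NewtonPolygon.h,
    Nat.mod_eq_of_lt (by omega), Nat.mod_eq_of_lt (by omega)]
  exact ⟨rfl, by rw [NewtonPolygon.dlt, if_neg (by dsimp only; omega)]⟩

/-- When `π⁻¹(s)` leaves the symbols of `ξ^C`, it lands on an extra symbol of `ξ`
(with `δ = 0`) from which one more step of `π⁻¹` returns to where `ξ^C` goes directly. -/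
lemma pinv_pinv_eq_pinv {s : Symb} (hs : ξC.mem s) (h : ξ.n s.1 < s.2 + ξ.m s.1) :
    ¬ ξC.mem (ξ.pinv s) ∧ ξ.dlt (ξ.pinv s) = 0 ∧ ξ.pinv (ξ.pinv s) = ξC.pinv s ∧
      ξ.dlt (ξC.pinv s) = 1 := by
  obtain ⟨⟨-, -, h1, -⟩, hN⟩ := hC.mem_iff.1 hs
  have hMN := hC.m_le_n s.1
  have hpinv : ξ.pinv s = (s.1, s.2 + ξ.m s.1) := by
    rw [ξ.pinv_apply h1, NewtonPolygon.h, Nat.mod_eq_of_lt (by omega)]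
    congr 1
    omega
  have hpinvC : ξC.pinv s = (s.1, s.2 + ξ.m s.1 - ξ.n s.1) := by
    rw [ξC.pinv_apply h1, hC.m_eq, hC.h_eq, Nat.mod_eq_sub_mod (by omega),
      Nat.mod_eq_of_lt (by omega)]
    congr 1
    omega
  refine ⟨?_, ?_, ?_, ?_⟩
  · rw [hpinv, hC.mem_iff]
    exact fun h => absurd h.2 (by dsimp only; omega)
  · rw [hpinv, NewtonPolygon.dlt, if_neg (by dsimp only; omega)]
  · rw [hpinv, hpinvC, ξ.pinv_apply (by dsimp only; omega), NewtonPolygon.h]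
    dsimp only
    rw [Nat.mod_eq_sub_mod (by omega), Nat.mod_eq_of_lt (by omega)]
    congr 1
    omega
  · rw [hpinvC, NewtonPolygon.dlt, if_pos (by dsimp only; omega)]

lemma dlt_pinv_of_not_mem {x : Symb} (hx : ξ.mem x) (hxC : ¬ ξC.mem x) :
    ξ.dlt (ξ.pinv x) = 1 := by
  have hN : ξ.n x.1 < x.2 := not_le.1 fun h => hxC (hC.mem_iff.2 ⟨hx, h⟩)
  have hMN := hC.m_le_n x.1
  obtain ⟨-, -, h1, hh⟩ := hx
  rw [NewtonPolygon.h] at hh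
  rw [ξ.pinv_apply h1, NewtonPolygon.h, Nat.mod_eq_sub_mod (by omega), Nat.mod_eq_of_lt (by omega),
    NewtonPolygon.dlt, if_pos (by dsimp only; omega)]

section Twisted

variable {w : Equiv.Perm Symb} (hw : ∀ t, ¬ ξC.mem t → w t = t)
include hw

lemma apply_eq_self_of_not_mem (t : Symb) (ht : ¬ ξ.mem t) : w t = t :=
  hw t (mt hC.mem_of_mem_curtailment ht)

lemma twistedPinv_step {s : Symb} (hs : ξC.mem s) :
    (ξ.dlt (ξC.twistedPinv w s) = 0 ∧ ξ.twistedPinv w s = ξC.twistedPinv w s) ∨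
      (ξ.dlt (ξC.twistedPinv w s) = 1 ∧ ξ.dlt (ξ.twistedPinv w s) = 0 ∧
        ξ.twistedPinv w (ξ.twistedPinv w s) = ξC.twistedPinv w s) := by
  have hws := Equiv.Perm.apply_mem_of_fixed_outside hw hs
  simp only [NewtonPolygon.twistedPinv]
  rcases le_or_gt ((w s).2 + ξ.m (w s).1) (ξ.n (w s).1) with h | h
  · obtain ⟨heq, hdlt⟩ := hC.pinv_eq_pinv hws h
    exact Or.inl ⟨heq ▸ hdlt, heq⟩
  · obtain ⟨hout, hdlt, heq, hdltC⟩ := hC.pinv_pinv_eq_pinv hws h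
    exact Or.inr ⟨hdltC, hdlt, by rw [hw _ hout, heq]⟩

lemma iterate_blockStart {t : Symb} (ht : ξC.mem t) (k : ℕ) :
    (ξ.twistedPinv w)^[blockStart (ξC.orbitDigits (ξC.twistedPinv w) t) k] t =
      (ξC.twistedPinv w)^[k] t := by
  induction k with
  | zero => rfl
  | succ k ih =>
    rw [blockStart_succ, NewtonPolygon.orbitDigits, hC.dlt_eq, iterate_succ_apply']
    rcases hC.twistedPinv_step hw ((ξC.mapsTo_twistedPinv hw).iterate k ht) with
      ⟨h0, heq⟩ | ⟨h1, -, heq⟩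
    · rw [h0, add_zero, iterate_succ_apply', ih, heq]
    · rw [h1, iterate_succ_apply', iterate_succ_apply', ih, heq]

/-- The `0` inserted before each `1` is the detour through an extra symbol. -/
lemma orbitDigits_eq_subst01 {t : Symb} (ht : ξC.mem t) :
    ξ.orbitDigits (ξ.twistedPinv w) t = subst01 (ξC.orbitDigits (ξC.twistedPinv w) t) := by
  set e := ξC.orbitDigits (ξC.twistedPinv w) t
  have he (k : ℕ) : e k = ξ.dlt (ξC.twistedPinv w ((ξC.twistedPinv w)^[k] t)) := by
    rw [← hC.dlt_eq, ← iterate_succ_apply' (ξC.twistedPinv w)]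
    rfl
  refine eq_subst01 (fun k => ξC.dlt_le_one _) (fun k => ?_) (fun k (hk : e k = 1) => ?_)
  all_goals have hstep := hC.twistedPinv_step hw ((ξC.mapsTo_twistedPinv hw).iterate k ht)
  · change ξ.dlt ((ξ.twistedPinv w)^[blockStart e k + 1] t) = 0
    rw [iterate_succ_apply', hC.iterate_blockStart hw ht]
    rcases hstep with ⟨h0, heq⟩ | ⟨-, h0, -⟩
    · rwa [heq]
    · exact h0
  · change ξ.dlt ((ξ.twistedPinv w)^[blockStart e k + 1 + 1] t) = 1
    rw [iterate_succ_apply', iterate_succ_apply', hC.iterate_blockStart hw ht]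
    rcases hstep with ⟨h0, -⟩ | ⟨h1, -, heq⟩
    · rw [← he k, hk] at h0
      exact absurd h0 one_ne_zero
    · rwa [heq]

lemma twistedVal_lt_twistedVal_iff {t t' : Symb} (ht : ξC.mem t) (ht' : ξC.mem t') :
    ξ.twistedVal w t < ξ.twistedVal w t' ↔ ξC.twistedVal w t < ξC.twistedVal w t' := by
  have hX := fun {s : Symb} (hs : ξ.mem s) =>
    ξ.isPeriodicBinary_orbitDigits (hC.apply_eq_self_of_not_mem hw) hs
  have hXC := fun {s : Symb} (hs : ξC.mem s) => ξC.isPeriodicBinary_orbitDigits hw hs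
  rw [NewtonPolygon.twistedVal, NewtonPolygon.twistedVal,
    binVal_lt_binVal_iff (hX (hC.mem_of_mem_curtailment ht))
      (hX (hC.mem_of_mem_curtailment ht')),
    hC.orbitDigits_eq_subst01 hw ht, hC.orbitDigits_eq_subst01 hw ht',
    subst01_lt_subst01_iff (hXC ht).1 (hXC ht').1, ← binVal_lt_binVal_iff (hXC ht) (hXC ht'),
    NewtonPolygon.twistedVal, NewtonPolygon.twistedVal]

lemma twistedVal_eq_twistedVal_iff {t t' : Symb} (ht : ξC.mem t) (ht' : ξC.mem t') :
    ξ.twistedVal w t = ξ.twistedVal w t' ↔ ξC.twistedVal w t = ξC.twistedVal w t' := by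
  have hX := fun {s : Symb} (hs : ξ.mem s) =>
    ξ.isPeriodicBinary_orbitDigits (hC.apply_eq_self_of_not_mem hw) hs
  have hXC := fun {s : Symb} (hs : ξC.mem s) => ξC.isPeriodicBinary_orbitDigits hw hs
  rw [NewtonPolygon.twistedVal, NewtonPolygon.twistedVal,
    binVal_eq_binVal_iff (hX (hC.mem_of_mem_curtailment ht))
      (hX (hC.mem_of_mem_curtailment ht')),
    hC.orbitDigits_eq_subst01 hw ht, hC.orbitDigits_eq_subst01 hw ht',
    subst01_inj (hXC ht).1 (hXC ht').1, ← binVal_eq_binVal_iff (hXC ht) (hXC ht'),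
    NewtonPolygon.twistedVal, NewtonPolygon.twistedVal]

lemma twistedVal_le_twistedVal_iff {t t' : Symb} (ht : ξC.mem t) (ht' : ξC.mem t') :
    ξ.twistedVal w t ≤ ξ.twistedVal w t' ↔ ξC.twistedVal w t ≤ ξC.twistedVal w t' := by
  rw [le_iff_lt_or_eq, le_iff_lt_or_eq, hC.twistedVal_lt_twistedVal_iff hw ht ht',
    hC.twistedVal_eq_twistedVal_iff hw ht ht']

/-- The digits of a symbol of `ξ^C` start with `0`, those of an extra symbol with `1`. -/
lemma twistedVal_lt_twistedVal_of_not_mem {t x : Symb} (ht : ξC.mem t) (hx : ξ.mem x)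
    (hxC : ¬ ξC.mem x) : ξ.twistedVal w t < ξ.twistedVal w x := by
  have hX := fun {s : Symb} (hs : ξ.mem s) =>
    ξ.isPeriodicBinary_orbitDigits (hC.apply_eq_self_of_not_mem hw) hs
  refine (binVal_lt_binVal_iff (hX (hC.mem_of_mem_curtailment ht)) (hX hx)).2
    ⟨0, fun k hk => absurd hk k.not_lt_zero, ?_⟩
  change ξ.orbitDigits _ t 0 < ξ.orbitDigits _ x 0
  rw [hC.orbitDigits_eq_subst01 hw ht, ← blockStart_zero, subst01_blockStart]
  change 0 < ξ.dlt (ξ.pinv (w x))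
  rw [hw x hxC, hC.dlt_pinv_of_not_mem hx hxC]
  exact Nat.one_pos

end Twisted

lemma lenR_eq_lenR {R R' : Symb → Symb → Prop}
    (hagree : ∀ t t', ξC.mem t → ξC.mem t' → (R t t' ↔ R' t t'))
    (hextra : ∀ x t, ξ.mem x → ¬ ξC.mem x → ξC.mem t → ¬ R x t) :
    ξ.lenR R = ξC.lenR R' := by
  unfold NewtonPolygon.lenR
  congr 1
  ext ⟨t, t'⟩
  simp only [Finset.mem_filter, Finset.mem_product, NewtonPolygon.mem_Tfin, hC.dlt_eq]
  constructor
  · rintro ⟨⟨ht, ht'⟩, hR, h0, h1⟩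
    have ht'C := hC.mem_of_dlt_eq_one ht' h1
    have htC : ξC.mem t := by_contra fun h => hextra t t' ht h ht'C hR
    exact ⟨⟨htC, ht'C⟩, (hagree _ _ htC ht'C).1 hR, h0, h1⟩
  · rintro ⟨⟨ht, ht'⟩, hR, h0, h1⟩
    exact ⟨⟨hC.mem_of_mem_curtailment ht, hC.mem_of_mem_curtailment ht'⟩,
      (hagree _ _ ht ht').2 hR, h0, h1⟩

lemma len_eq : ξ.len = ξC.len := by
  have hw : ∀ t, ¬ ξC.mem t → (1 : Equiv.Perm Symb) t = t := fun _ _ => rfl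
  rw [ξ.len_eq_lenR, ξC.len_eq_lenR]
  refine hC.lenR_eq_lenR (fun t t' ht ht' => ?_) (fun x t hx hxC ht h => ?_)
  · simp only [NewtonPolygon.slt, NewtonPolygon.bexp_eq_twistedVal,
      hC.twistedVal_lt_twistedVal_iff hw ht ht', hC.twistedVal_eq_twistedVal_iff hw ht ht']
  · have := hC.twistedVal_lt_twistedVal_of_not_mem hw ht hx hxC
    rw [NewtonPolygon.slt, NewtonPolygon.bexp_eq_twistedVal] at h
    rcases h with h | ⟨h, -⟩ <;> linarith

section Specializations

variable {u v : Symb} (hu : ξC.mem u) (hv : ξC.mem v)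
include hu hv

lemma curtailment_exGeneric_of_exGeneric : ξ.ExGeneric u v → ξC.ExGeneric u v := by
  rintro ⟨R, ⟨hirr, htrans, htot, hcomp⟩, hlen⟩
  have hw := fun t => Equiv.swap_apply_of_not_mem (t := t) hu hv
  have hsub : ∀ t ∈ ξC.Tfin, t ∈ ξ.Tfin := fun t ht =>
    ξ.mem_Tfin.2 (hC.mem_of_mem_curtailment (ξC.mem_Tfin.1 ht))
  refine ⟨R, ⟨fun t ht => hirr t (hsub t ht),
    fun t ht t' ht' t'' ht'' => htrans t (hsub t ht) t' (hsub t' ht') t'' (hsub t'' ht''),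
    fun t ht t' ht' => htot t (hsub t ht) t' (hsub t' ht'), fun t ht t' ht' h => ?_⟩, ?_⟩
  · have := hcomp t (hsub t ht) t' (hsub t' ht') h
    simp only [NewtonPolygon.bmod_eq_twistedVal] at this ⊢
    rwa [hC.twistedVal_le_twistedVal_iff hw (ξC.mem_Tfin.1 ht) (ξC.mem_Tfin.1 ht')] at this
  · rw [← hC.len_eq, ← hC.lenR_eq_lenR (fun _ _ _ _ => Iff.rfl) fun x t hx hxC ht h => ?_]
    · exact hlen
    · have := hcomp x (ξ.mem_Tfin.2 hx) t (ξ.mem_Tfin.2 (hC.mem_of_mem_curtailment ht)) h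
      rw [NewtonPolygon.bmod_eq_twistedVal] at this
      linarith [hC.twistedVal_lt_twistedVal_of_not_mem hw ht hx hxC]

section Extension

variable {R : Symb → Symb → Prop} (hR : ξC.IsSpec u v R)
include hR

lemma isSpec_extension : ξ.IsSpec u v (ξ.extension ξC u v R) := by
  obtain ⟨hirr, htrans, htot, -⟩ := hR
  have hw := fun t => Equiv.swap_apply_of_not_mem (t := t) hu hv
  simp only [NewtonPolygon.mem_Tfin] at hirr htrans htot
  refine ξ.isSpec_lexRefine u v (fun t _ h => ?_) (fun t _ t' _ t'' _ h h' => ?_)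
    (fun t ht t' ht' hne heq => ?_)
  · rcases h with ⟨ht, -, h⟩ | ⟨-, -, h⟩
    · exact hirr t ht h
    · exact lt_irrefl _ h
  · rcases h with ⟨ht, hA, h⟩ | ⟨ht, hA, h⟩ <;>
      rcases h' with ⟨hB, hD, h'⟩ | ⟨hB, hD, h'⟩
    · exact Or.inl ⟨ht, hD, htrans t ht t' hA t'' hD h h'⟩
    · exact absurd hA hB
    · exact absurd hB hA
    · exact Or.inr ⟨ht, hD, h.trans h'⟩
  · rw [NewtonPolygon.mem_Tfin] at ht ht'
    rw [NewtonPolygon.bmod_eq_twistedVal] at heq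
    by_cases htC : ξC.mem t <;> by_cases ht'C : ξC.mem t'
    · rcases htot t htC t' ht'C hne with h | h
      · exact Or.inl (Or.inl ⟨htC, ht'C, h⟩)
      · exact Or.inr (Or.inl ⟨ht'C, htC, h⟩)
    · exact absurd heq (hC.twistedVal_lt_twistedVal_of_not_mem hw htC ht' ht'C).ne
    · exact absurd heq (hC.twistedVal_lt_twistedVal_of_not_mem hw ht'C ht htC).ne'
    · rcases lt_trichotomy (toLex t) (toLex t') with h | h | h
      · exact Or.inl (Or.inr ⟨htC, ht'C, h⟩)
      · exact absurd (toLex_inj.1 h) hne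
      · exact Or.inr (Or.inr ⟨ht'C, htC, h⟩)

lemma lenR_extension : ξ.lenR (ξ.extension ξC u v R) = ξC.lenR R := by
  obtain ⟨-, -, htot, hcomp⟩ := hR
  have hw := fun t => Equiv.swap_apply_of_not_mem (t := t) hu hv
  simp only [NewtonPolygon.mem_Tfin, NewtonPolygon.bmod_eq_twistedVal] at htot hcomp
  refine hC.lenR_eq_lenR (fun t t' ht ht' => ?_) fun x t hx hxC ht h => ?_
  · simp only [NewtonPolygon.extension, NewtonPolygon.extendRel, Prod.lex_def,
      NewtonPolygon.bmod_eq_twistedVal, hC.twistedVal_lt_twistedVal_iff hw ht ht',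
      hC.twistedVal_eq_twistedVal_iff hw ht ht']
    constructor
    · rintro (h | ⟨-, ⟨-, -, h⟩ | ⟨h, -⟩⟩)
      · by_contra hnot
        rcases htot t ht t' ht' (by rintro rfl; exact lt_irrefl _ h) with h' | h'
        · exact hnot h'
        · exact absurd (hcomp t' ht' t ht h') (not_le.2 h)
      · exact h
      · exact absurd ht h
    · intro h
      rcases (hcomp t ht t' ht' h).lt_or_eq with h' | h'
      · exact Or.inl h'
      · exact Or.inr ⟨h', Or.inl ⟨ht, ht', h⟩⟩
  · simp only [NewtonPolygon.extension, Prod.lex_def, NewtonPolygon.bmod_eq_twistedVal] at h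
    have := hC.twistedVal_lt_twistedVal_of_not_mem hw ht hx hxC
    rcases h with h | ⟨h, -⟩ <;> linarith

end Extension

lemma exGeneric_iff : ξ.ExGeneric u v ↔ ξC.ExGeneric u v :=
  ⟨hC.curtailment_exGeneric_of_exGeneric hu hv, fun ⟨R, hR, hlen⟩ =>
    ⟨_, hC.isSpec_extension hu hv hR, by rw [hC.lenR_extension hu hv hR, hC.len_eq, hlen]⟩⟩

end Specializations

end NewtonPolygon.IsCurtailment

theorem statement15_general (ξ ξC : NewtonPolygon) (m1 n1 m2 n2 : ℕ)
    (hseg : ξ.seg = [(m1, n1), (m2, n2)])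
    (h2 : m2 ≤ n2)
    (hsegC : ξC.seg = [(m1, n1 - m1), (m2, n2 - m2)])
    (i j : ℕ) (hi1 : m1 < i) (hi2 : i ≤ n1) (hj1 : 1 ≤ j) (hj2 : j ≤ m2) :
    ξ.ExGeneric (1, i) (2, j) ↔ ξC.ExGeneric (1, i) (2, j) := by
  have hC : ξ.IsCurtailment ξC := ⟨by simp [hseg]; omega, by simp [hseg, hsegC]⟩
  have hmem : ξC.mem (1, i) ∧ ξC.mem (2, j) := by
    refine ⟨?_, ?_⟩ <;>
      simp [NewtonPolygon.mem, NewtonPolygon.z, NewtonPolygon.h, NewtonPolygon.m,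
        NewtonPolygon.n, hsegC] <;> omega
  exact hC.exGeneric_iff hmem.1 hmem.2

/-- for a two-segment Newton polygon `ξ = ((m1,n1),(m2,n2))` with
`n1·m2 > m1·n2` and `n2 ≥ m2`, its curtailment `ξ^C = ((m1,n1-m1),(m2,n2-m2))`, and
`u = (1,i)`, `v = (2,j)` with `m1 < i ≤ n1`, `1 ≤ j ≤ m2` and `u < v` in `T(ξ)`:
there is a generic specialization of `S(ξ)` by `(u,v)` iff there is one of `S(ξ^C)`
by `(u,v)`. -/
theorem statement15 (ξ ξC : NewtonPolygon) (m1 n1 m2 n2 : ℕ)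
    (hseg : ξ.seg = [(m1, n1), (m2, n2)])
    (hslope : m1 * n2 < n1 * m2) (h2 : m2 ≤ n2)
    (hsegC : ξC.seg = [(m1, n1 - m1), (m2, n2 - m2)])
    (i j : ℕ) (hi1 : m1 < i) (hi2 : i ≤ n1) (hj1 : 1 ≤ j) (hj2 : j ≤ m2)
    (huv : ξ.slt (1, i) (2, j)) :
    ξ.ExGeneric (1, i) (2, j) ↔ ξC.ExGeneric (1, i) (2, j) :=
  statement15_general ξ ξC m1 n1 m2 n2 hseg h2 hsegC i j hi1 hi2 hj1 hj2
end
end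

section
/- Let h = c + d with c, d ≥ 1, and work in the symmetric group S_h of permutations of {1,…,h} with length ℓ(w) = #{(i,j) : 1 ≤ i < j ≤ h, w(i) > w(j)}. Let W_J = {u ∈ S_h : u({1,…,c}) = {1,…,c}}, let ^J W = {w ∈ S_h : ℓ(uw) ≥ ℓ(w) for all u ∈ W_J}, let x ∈ S_h be defined by x(i) = i + d for i ≤ c and x(i) = i − c for i > c, and set θ(u) = x u x^{−1}. Let ≤ denote the Bruhat order on S_h. Suppose w, w' ∈ ^J W satisfy ℓ(w') = ℓ(w) − 1 and there exists u_0 ∈ W_J with u_0^{−1} w' θ(u_0) ≤ w. Then there exist v ∈ S_h and u ∈ W_J such that: (i) v = w s for some transposition s; (ii) ℓ(v) = ℓ(w) − 1; (iii) w' = u v θ(u^{−1}), where θ(u^{−1}) = x u^{−1} x^{−1}. -/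
noncomputable section

/-- The length of a permutation: its number of inversions. -/
def permLen {h : ℕ} (w : Equiv.Perm (Fin h)) : ℕ :=
  ((Finset.univ : Finset (Fin h × Fin h)).filter (fun p => p.1 < p.2 ∧ w p.2 < w p.1)).card

/-- `s` is a transposition. -/
def IsTransposition {h : ℕ} (s : Equiv.Perm (Fin h)) : Prop :=
  ∃ i j : Fin h, i ≠ j ∧ s = Equiv.swap i j

/-- The Bruhat order: `v ≤ w` iff there is a finite sequence `w = w_0, w_1, …, w_k = v`
with `w_{l+1} = w_l t_l` for a transposition `t_l` and `ℓ(w_{l+1}) < ℓ(w_l)`. -/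
def BruhatLE {h : ℕ} (v w : Equiv.Perm (Fin h)) : Prop :=
  ∃ L : List (Equiv.Perm (Fin h)), L.head? = some w ∧ L.getLast? = some v ∧
    L.Chain' (fun a b => (∃ t, IsTransposition t ∧ b = a * t) ∧ permLen b < permLen a)

/-- `W_J`: permutations stabilizing `{1,…,c}` (as the set of the first `c` elements). -/
def memWJ (c d : ℕ) (u : Equiv.Perm (Fin (c + d))) : Prop :=
  ∀ i : Fin (c + d), (i : ℕ) < c → (u i : ℕ) < c

/-- `^J W`: elements `w` with `ℓ(uw) ≥ ℓ(w)` for all `u ∈ W_J`. -/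
def memJW (c d : ℕ) (w : Equiv.Perm (Fin (c + d))) : Prop :=
  ∀ u : Equiv.Perm (Fin (c + d)), memWJ c d u → permLen w ≤ permLen (u * w)

open Equiv

-- inversion set
def invSet {h : ℕ} (w : Equiv.Perm (Fin h)) : Finset (Fin h × Fin h) :=
  (Finset.univ : Finset (Fin h × Fin h)).filter (fun p => p.1 < p.2 ∧ w p.2 < w p.1)

lemma permLen_eq {h : ℕ} (w : Equiv.Perm (Fin h)) : permLen w = (invSet w).card := rfl

lemma mem_invSet {h : ℕ} {w : Equiv.Perm (Fin h)} {p : Fin h × Fin h} :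
    p ∈ invSet w ↔ p.1 < p.2 ∧ w p.2 < w p.1 := by
  simp [invSet]

-- subadditivity
lemma permLen_mul_le {h : ℕ} (a b : Equiv.Perm (Fin h)) :
    permLen (a * b) ≤ permLen a + permLen b := by
  classical
  rw [permLen_eq, permLen_eq, permLen_eq,
    ← Finset.card_filter_add_card_filter_not (s := invSet (a * b))
      (fun p => b p.2 < b p.1)]
  have h1 : ((invSet (a*b)).filter (fun p => b p.2 < b p.1)).card ≤ (invSet b).card := by
    apply Finset.card_le_card
    intro p hp
    simp only [Finset.mem_filter, mem_invSet] at hp ⊢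
    exact ⟨hp.1.1, hp.2⟩
  have h2 : ((invSet (a*b)).filter (fun p => ¬ b p.2 < b p.1)).card ≤ (invSet a).card := by
    apply Finset.card_le_card_of_injOn (fun p => (b p.1, b p.2))
    · intro p hp
      simp only [Finset.mem_coe, Finset.mem_filter, mem_invSet] at hp ⊢
      obtain ⟨⟨h12, hinv⟩, hnb⟩ := hp
      refine ⟨lt_of_le_of_ne (not_lt.mp hnb) ?_, hinv⟩
      intro he
      exact absurd (b.injective he) (ne_of_lt h12)
    · intro p _ q _ hpq
      simp only [Prod.mk.injEq] at hpq
      exact Prod.ext (b.injective hpq.1) (b.injective hpq.2)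
  omega

-- the swap of adjacent positions preserves order on all pairs except (i,j)
lemma swap_adj_lt {h : ℕ} {i j : Fin h} (hij : (i : ℕ) + 1 = (j : ℕ))
    {p q : Fin h} (hpq : p < q) (hne : ¬(p = i ∧ q = j)) :
    Equiv.swap i j p < Equiv.swap i j q := by
  have hij' : i ≠ j := by intro he; rw [he] at hij; omega
  rcases eq_or_ne p i with rfl | hpi
  · -- q ≠ j
    have hqj : q ≠ j := fun hq => hne ⟨rfl, hq⟩
    have hqi : q ≠ p := (ne_of_lt hpq).symm
    rw [Equiv.swap_apply_left, Equiv.swap_apply_of_ne_of_ne hqi hqj]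
    have : (p : ℕ) < (q : ℕ) := hpq
    have : (q : ℕ) ≠ (j : ℕ) := fun he => hqj (Fin.ext he)
    exact Fin.lt_def.mpr (by omega)
  · rcases eq_or_ne p j with rfl | hpj
    · -- p = j, q > j so q ≠ i, q ≠ j
      have hqj : q ≠ p := (ne_of_lt hpq).symm
      have hqi : q ≠ i := by
        intro he; subst he
        have : (q : ℕ) + 1 = (p : ℕ) := hij
        have : (p : ℕ) < (q : ℕ) := hpq
        omega
      rw [Equiv.swap_apply_right, Equiv.swap_apply_of_ne_of_ne hqi hqj]
      have h1 : (p : ℕ) < (q : ℕ) := hpq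
      exact Fin.lt_def.mpr (by omega)
    · rw [Equiv.swap_apply_of_ne_of_ne hpi hpj]
      rcases eq_or_ne q i with rfl | hqi
      · rw [Equiv.swap_apply_left]
        have h1 : (p : ℕ) < (q : ℕ) := hpq
        exact Fin.lt_def.mpr (by omega)
      · rcases eq_or_ne q j with rfl | hqj
        · rw [Equiv.swap_apply_right]
          have h1 : (p : ℕ) < (q : ℕ) := hpq
          have h2 : (p : ℕ) ≠ (i : ℕ) := fun he => hpi (Fin.ext he)
          exact Fin.lt_def.mpr (by omega)
        · rw [Equiv.swap_apply_of_ne_of_ne hqi hqj]; exact hpq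

lemma permLen_mul_swap_adj {h : ℕ} (w : Equiv.Perm (Fin h)) {i j : Fin h}
    (hij : (i : ℕ) + 1 = (j : ℕ)) (hlt : w i < w j) :
    permLen (w * Equiv.swap i j) = permLen w + 1 := by
  classical
  have hij' : i ≠ j := by intro he; rw [he] at hij; omega
  have hijlt : i < j := Fin.lt_def.mpr (by omega)
  set s := Equiv.swap i j with hs
  have hmem : (i, j) ∈ invSet (w * s) := by
    rw [mem_invSet]
    refine ⟨hijlt, ?_⟩
    simp [hs, Equiv.swap_apply_left, Equiv.swap_apply_right, Equiv.Perm.mul_apply]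
    exact hlt
  have hcard : (invSet w).card = ((invSet (w * s)).erase (i, j)).card := by
    apply Finset.card_nbij' (fun p => (s p.1, s p.2)) (fun p => (s p.1, s p.2))
    · intro p hp
      rw [Finset.mem_coe, mem_invSet] at hp
      have hne : ¬(p.1 = i ∧ p.2 = j) := by
        rintro ⟨h1, h2⟩
        rw [h1, h2] at hp
        exact absurd hp.2 (not_lt.mpr (le_of_lt hlt))
      rw [Finset.mem_coe, Finset.mem_erase, mem_invSet]
      constructor
      · intro he
        rw [Prod.mk.injEq] at he
        have h1 : p.1 = s i := by rw [← he.1]; simp [hs]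
        have h2 : p.2 = s j := by rw [← he.2]; simp [hs]
        rw [Equiv.swap_apply_left] at h1
        rw [Equiv.swap_apply_right] at h2
        rw [h1, h2] at hp
        exact absurd hp.1 (not_lt.mpr (le_of_lt hijlt))
      · refine ⟨swap_adj_lt hij hp.1 hne, ?_⟩
        simp only [Equiv.Perm.mul_apply, hs, Equiv.swap_apply_self]
        exact hp.2
    · intro p hp
      rw [Finset.mem_coe, Finset.mem_erase, mem_invSet] at hp
      obtain ⟨hne, h12, hinv⟩ := hp
      have hne' : ¬(p.1 = i ∧ p.2 = j) := by
        rintro ⟨h1, h2⟩; exact hne (by rw [Prod.ext_iff]; exact ⟨h1, h2⟩)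
      rw [Finset.mem_coe, mem_invSet]
      refine ⟨swap_adj_lt hij h12 hne', ?_⟩
      simpa only [Equiv.Perm.mul_apply] using hinv
    · intro p _; simp [hs, Equiv.swap_apply_self]
    · intro p _; simp [hs, Equiv.swap_apply_self]
  rw [permLen_eq, permLen_eq, hcard, Finset.card_erase_of_mem hmem]
  have : 1 ≤ (invSet (w * s)).card := Finset.card_pos.mpr ⟨(i, j), hmem⟩
  omega

lemma permLen_mul_swap_adj' {h : ℕ} (w : Equiv.Perm (Fin h)) {i j : Fin h}
    (hij : (i : ℕ) + 1 = (j : ℕ)) (hlt : w j < w i) :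
    permLen (w * Equiv.swap i j) + 1 = permLen w := by
  have h1 : (w * Equiv.swap i j) i < (w * Equiv.swap i j) j := by
    simp only [Equiv.Perm.mul_apply, Equiv.swap_apply_left, Equiv.swap_apply_right]
    exact hlt
  have := permLen_mul_swap_adj (w * Equiv.swap i j) hij h1
  rw [mul_assoc, Equiv.swap_mul_self, mul_one] at this
  omega

lemma permLen_mul_swap_lt_aux {h : ℕ} (n : ℕ) :
    ∀ (w : Equiv.Perm (Fin h)) (i j : Fin h), (j : ℕ) - (i : ℕ) ≤ n → i < j → w j < w i →
      permLen (w * Equiv.swap i j) < permLen w := by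
  induction n with
  | zero => intro w i j hn hij _; exact absurd (Fin.lt_def.mp hij) (by omega)
  | succ n IH =>
    intro w i j hn hij hw
    have hij' : (i : ℕ) < (j : ℕ) := hij
    rcases eq_or_ne ((i : ℕ) + 1) (j : ℕ) with hadj | hnadj
    · have := permLen_mul_swap_adj' w hadj hw
      omega
    · -- k = j - 1
      have hjpos : 0 < (j : ℕ) := by omega
      set k : Fin h := ⟨(j : ℕ) - 1, by omega⟩ with hk
      have hkv : (k : ℕ) = (j : ℕ) - 1 := rfl
      have hik : (i : ℕ) < (k : ℕ) := by omega
      have hkj : (k : ℕ) + 1 = (j : ℕ) := by omega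
      have hikne : i ≠ k := Fin.ne_of_lt (Fin.lt_def.mpr hik)
      have hijne : i ≠ j := Fin.ne_of_lt hij
      have hkjne : k ≠ j := Fin.ne_of_lt (Fin.lt_def.mpr (by omega))
      -- swap i j = swap k j * swap i k * swap k j
      have hdecomp : Equiv.swap i j = Equiv.swap k j * Equiv.swap i k * Equiv.swap k j := by
        have := Equiv.swap_mul_swap_mul_swap (x := i) (y := k) (z := j) hikne hijne
        rw [Equiv.swap_comm j i] at this
        exact this.symm
      set w1 := w * Equiv.swap k j with hw1
      set w2 := w1 * Equiv.swap i k with hw2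
      have hrw : w * Equiv.swap i j = w2 * Equiv.swap k j := by
        rw [hdecomp, hw2, hw1]; group
      have hw1i : w1 i = w i := by
        rw [hw1]; simp only [Equiv.Perm.mul_apply]
        rw [Equiv.swap_apply_of_ne_of_ne hikne hijne]
      have hw1k : w1 k = w j := by
        rw [hw1]; simp only [Equiv.Perm.mul_apply, Equiv.swap_apply_left]
      have hw1j : w1 j = w k := by
        rw [hw1]; simp only [Equiv.Perm.mul_apply, Equiv.swap_apply_right]
      have hw2i : w2 i = w j := by
        rw [hw2]; simp only [Equiv.Perm.mul_apply, Equiv.swap_apply_left]; exact hw1k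
      have hw2k : w2 k = w i := by
        rw [hw2]; simp only [Equiv.Perm.mul_apply, Equiv.swap_apply_right]; exact hw1i
      have hw2j : w2 j = w k := by
        rw [hw2]; simp only [Equiv.Perm.mul_apply]
        rw [Equiv.swap_apply_of_ne_of_ne (Ne.symm hijne) (Ne.symm hkjne)]; exact hw1j
      -- IH for (i,k) on w1 : need w1 k < w1 i i.e. w j < w i ✓
      have hIH : permLen w2 < permLen w1 := by
        apply IH w1 i k (by omega) (Fin.lt_def.mpr hik)
        rw [hw1i, hw1k]; exact hw
      rcases lt_trichotomy (w k) (w j) with hkj1 | hkj1 | hkj1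
      · -- w k < w j < w i : w1 = w * skj increase
        have h1 : permLen w1 = permLen w + 1 :=
          permLen_mul_swap_adj w hkj (by exact hkj1)
        have h3 : permLen (w2 * Equiv.swap k j) + 1 = permLen w2 := by
          apply permLen_mul_swap_adj' w2 hkj
          rw [hw2k, hw2j]; exact lt_trans hkj1 hw
        rw [hrw]; omega
      · exact absurd (w.injective hkj1) hkjne
      · -- w j < w k : w1 decrease
        have h1 : permLen w1 + 1 = permLen w :=
          permLen_mul_swap_adj' w hkj hkj1
        rcases lt_trichotomy (w k) (w i) with hki | hki | hki
        · -- w2 k = w i > w k = w2 j : decrease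
          have h3 : permLen (w2 * Equiv.swap k j) + 1 = permLen w2 := by
            apply permLen_mul_swap_adj' w2 hkj
            rw [hw2k, hw2j]; exact hki
          rw [hrw]; omega
        · exact absurd (w.injective hki).symm hikne
        · have h3 : permLen (w2 * Equiv.swap k j) = permLen w2 + 1 := by
            apply permLen_mul_swap_adj w2 hkj
            rw [hw2k, hw2j]; exact hki
          rw [hrw]; omega

lemma permLen_mul_swap_lt {h : ℕ} (w : Equiv.Perm (Fin h)) {i j : Fin h}
    (hij : i < j) (hw : w j < w i) : permLen (w * Equiv.swap i j) < permLen w :=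
  permLen_mul_swap_lt_aux ((j : ℕ) - (i : ℕ)) w i j le_rfl hij hw

section
variable {c d : ℕ}

lemma memWJ_inv {u : Equiv.Perm (Fin (c + d))} (hu : memWJ c d u) : memWJ c d u⁻¹ := by
  classical
  set S : Finset (Fin (c + d)) := Finset.univ.filter (fun i => (i : ℕ) < c) with hS
  have hmaps : ∀ i ∈ S, u i ∈ S := by
    intro i hi
    simp only [hS, Finset.mem_filter, Finset.mem_univ, true_and] at hi ⊢
    exact hu i hi
  have himg : S.image u = S := by
    apply Finset.eq_of_subset_of_card_le
    · intro j hj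
      rw [Finset.mem_image] at hj
      obtain ⟨i, hi, rfl⟩ := hj
      exact hmaps i hi
    · rw [Finset.card_image_of_injective _ u.injective]
  intro i hi
  have : i ∈ S := by simp [hS, hi]
  rw [← himg, Finset.mem_image] at this
  obtain ⟨j, hj, hji⟩ := this
  have : u⁻¹ i = j := by rw [← hji]; simp
  rw [this]
  simpa [hS] using hj

lemma memWJ_block_iff {u : Equiv.Perm (Fin (c + d))} (hu : memWJ c d u) (a : Fin (c + d)) :
    (u a : ℕ) < c ↔ (a : ℕ) < c := by
  constructor
  · intro hua
    have := memWJ_inv hu (u a) hua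
    simpa using this
  · exact hu a

-- for w ∈ ^J W: no same-block inversions
lemma noSB_of_memJW {w : Equiv.Perm (Fin (c + d))} (hw : memJW c d w) :
    ∀ i j : Fin (c + d), i < j → (((w i : ℕ) < c) ↔ ((w j : ℕ) < c)) → w i < w j := by
  intro i j hij hblk
  by_contra hge
  have hne : w i ≠ w j := fun he => absurd (w.injective he) (Fin.ne_of_lt hij)
  have hlt : w j < w i := lt_of_le_of_ne (not_lt.mp hge) (fun he => hne he.symm)
  set t := Equiv.swap (w i) (w j) with ht
  have htWJ : memWJ c d t := by
    intro a ha
    rcases eq_or_ne a (w i) with rfl | h1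
    · rw [ht, Equiv.swap_apply_left]; exact hblk.mp ha
    rcases eq_or_ne a (w j) with rfl | h2
    · rw [ht, Equiv.swap_apply_right]; exact hblk.mpr ha
    · rw [ht, Equiv.swap_apply_of_ne_of_ne h1 h2]; exact ha
  have hconj : t * w = w * Equiv.swap i j := by
    rw [ht, Equiv.swap_apply_apply]; group
  have := hw t htWJ
  rw [hconj] at this
  exact absurd (permLen_mul_swap_lt w hij hlt) (not_lt.mpr this)

-- additivity: ℓ(u * w) = ℓ(u) + ℓ(w) for u ∈ W_J and w without same-block inversions
lemma permLen_additive {u w : Equiv.Perm (Fin (c + d))} (hu : memWJ c d u)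
    (hw : ∀ i j : Fin (c + d), i < j → (((w i : ℕ) < c) ↔ ((w j : ℕ) < c)) → w i < w j) :
    permLen (u * w) = permLen u + permLen w := by
  classical
  rw [permLen_eq, permLen_eq, permLen_eq,
    ← Finset.card_filter_add_card_filter_not (s := invSet (u * w))
      (fun p => ((w p.1 : ℕ) < c) ↔ ((w p.2 : ℕ) < c))]
  have hsame : ((invSet (u * w)).filter
      (fun p => ((w p.1 : ℕ) < c) ↔ ((w p.2 : ℕ) < c))).card = (invSet u).card := by
    apply Finset.card_nbij' (fun p => (w p.1, w p.2)) (fun q => (w⁻¹ q.1, w⁻¹ q.2))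
    · intro p hp
      simp only [Finset.mem_coe, Finset.mem_filter, mem_invSet] at hp
      obtain ⟨⟨h12, hinv⟩, hblk⟩ := hp
      rw [Finset.mem_coe, mem_invSet]
      exact ⟨hw p.1 p.2 h12 hblk, hinv⟩
    · intro q hq
      rw [Finset.mem_coe, mem_invSet] at hq
      obtain ⟨h12, hinv⟩ := hq
      have hblk : ((q.1 : ℕ) < c) ↔ ((q.2 : ℕ) < c) := by
        constructor
        · intro h1
          by_contra h2
          -- q.1 low, q.2 high: u q.1 < c ≤ u q.2, contradicting hinv
          have ha := hu q.1 h1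
          have hb : ¬ ((u q.2 : ℕ) < c) := fun hb => h2 ((memWJ_block_iff hu q.2).mp hb)
          exact absurd (Fin.lt_def.mp hinv) (by omega)
        · intro h2
          by_contra h1
          exact absurd (Fin.lt_def.mp h12)
            (by have := hu q.1; have h2' := hu q.2 h2
                omega)
      simp only [Finset.mem_coe, Finset.mem_filter, mem_invSet]
      have hne : q.1 ≠ q.2 := Fin.ne_of_lt h12
      have hwlt : w⁻¹ q.1 < w⁻¹ q.2 := by
        have hne' : w⁻¹ q.1 ≠ w⁻¹ q.2 := fun he => hne (w⁻¹.injective he)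
        rcases lt_or_gt_of_ne hne' with h | h
        · exact h
        · exfalso
          have := hw (w⁻¹ q.2) (w⁻¹ q.1) h (by simp [hblk.symm])
          simp only [Equiv.Perm.inv_def, Equiv.apply_symm_apply] at this
          exact absurd this (not_lt.mpr (le_of_lt h12))
      refine ⟨⟨hwlt, ?_⟩, by simp [hblk]⟩
      simp only [Equiv.Perm.mul_apply, Equiv.Perm.inv_def, Equiv.apply_symm_apply]
      exact hinv
    · intro p _; simp
    · intro q _; simp
  have hcross : ((invSet (u * w)).filter
      (fun p => ¬(((w p.1 : ℕ) < c) ↔ ((w p.2 : ℕ) < c)))).card = (invSet w).card := by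
    congr 1
    ext p
    simp only [Finset.mem_filter, mem_invSet, Equiv.Perm.mul_apply]
    constructor
    · rintro ⟨⟨h12, hinv⟩, hblk⟩
      refine ⟨h12, ?_⟩
      rcases Classical.em ((w p.1 : ℕ) < c) with h1 | h1
      · exfalso
        have h2 : ¬ ((w p.2 : ℕ) < c) := fun h2 => hblk ⟨fun _ => h2, fun _ => h1⟩
        have ha := hu (w p.1) h1
        have hb : ¬ ((u (w p.2) : ℕ) < c) := fun hb => h2 ((memWJ_block_iff hu _).mp hb)
        exact absurd (Fin.lt_def.mp hinv) (by omega)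
      · have h2 : (w p.2 : ℕ) < c := by
          by_contra h2
          exact hblk ⟨fun hx => absurd hx h1, fun hx => absurd hx h2⟩
        exact Fin.lt_def.mpr (by omega)
    · rintro ⟨h12, hinv⟩
      have hblk : ¬(((w p.1 : ℕ) < c) ↔ ((w p.2 : ℕ) < c)) := by
        intro hblk
        exact absurd (hw p.1 p.2 h12 hblk) (not_lt.mpr (le_of_lt hinv))
      have h1 : ¬ ((w p.1 : ℕ) < c) := by
        intro h1
        have h2 : (w p.2 : ℕ) < c := by
          have := Fin.lt_def.mp hinv; omega
        exact hblk ⟨fun _ => h2, fun _ => h1⟩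
      have h2 : (w p.2 : ℕ) < c := by
        by_contra h2
        exact hblk ⟨fun hx => absurd hx h1, fun hx => absurd hx h2⟩
      refine ⟨⟨h12, ?_⟩, hblk⟩
      have ha := hu (w p.2) h2
      have hb : ¬ ((u (w p.1) : ℕ) < c) := fun hb => h1 ((memWJ_block_iff hu _).mp hb)
      exact Fin.lt_def.mpr (by omega)
  omega
end


section
variable {c d : ℕ}

lemma permLen_theta_le {u : Equiv.Perm (Fin (c + d))} (hu : memWJ c d u)
    (x : Equiv.Perm (Fin (c + d)))
    (hx : ∀ i : Fin (c + d), (x i : ℕ) = if (i : ℕ) < c then (i : ℕ) + d else (i : ℕ) - c) :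
    permLen (x * u * x⁻¹) ≤ permLen u := by
  classical
  have xblock : ∀ a : Fin (c + d), (a : ℕ) < c ↔ ¬((x a : ℕ) < d) := by
    intro a
    have := hx a
    have ha := a.isLt
    split_ifs at this <;> omega
  have xlt_same : ∀ a b : Fin (c + d), (((a : ℕ) < c) ↔ ((b : ℕ) < c)) →
      (x a < x b ↔ a < b) := by
    intro a b hab
    have h1 := hx a; have h2 := hx b
    rw [Fin.lt_def, Fin.lt_def]
    rcases Classical.em ((a : ℕ) < c) with ha | ha
    · have hb := hab.mp ha
      rw [if_pos ha] at h1; rw [if_pos hb] at h2; omega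
    · have hb := fun hb' => ha (hab.mpr hb')
      rw [if_neg ha] at h1; rw [if_neg hb] at h2
      have ha' := Nat.not_lt.mp ha
      have hb' := Nat.not_lt.mp hb
      omega
  rw [permLen_eq, permLen_eq]
  apply Finset.card_le_card_of_injOn (fun p => (x⁻¹ p.1, x⁻¹ p.2))
  · intro p hp
    rw [Finset.mem_coe, mem_invSet] at hp ⊢
    obtain ⟨h12, hinv⟩ := hp
    set a := x⁻¹ p.1 with hadef
    set b := x⁻¹ p.2 with hbdef
    have hpa : p.1 = x a := by rw [hadef]; simp
    have hpb : p.2 = x b := by rw [hbdef]; simp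
    rw [hpa, hpb] at h12
    have hinv' : x (u b) < x (u a) := by
      simpa [Equiv.Perm.mul_apply, hadef, hbdef] using hinv
    have hblk : ((a : ℕ) < c) ↔ ((b : ℕ) < c) := by
      constructor
      · intro ha
        by_contra hb
        -- a low, b high: x a ≥ d > x b: contradict h12
        have h1 := (xblock a).mp ha
        have h2 : (x b : ℕ) < d := by
          by_contra h2; exact hb ((xblock b).mpr h2)
        exact absurd (Fin.lt_def.mp h12) (by omega)
      · intro hb
        by_contra ha
        -- a high, b low: u a high, u b low: x(u b) ≥ d > x(u a): contradict hinv'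
        have hua : ¬ ((u a : ℕ) < c) := fun hq => ha ((memWJ_block_iff hu a).mp hq)
        have hub : (u b : ℕ) < c := hu b hb
        have h1 := (xblock (u b)).mp hub
        have h2 : (x (u a) : ℕ) < d := by
          by_contra h2; exact hua ((xblock (u a)).mpr h2)
        exact absurd (Fin.lt_def.mp hinv') (by omega)
    refine ⟨(xlt_same a b hblk).mp h12, ?_⟩
    have hblku : ((u b : ℕ) < c) ↔ ((u a : ℕ) < c) := by
      rw [memWJ_block_iff hu a, memWJ_block_iff hu b]; exact hblk.symm
    exact (xlt_same (u b) (u a) hblku).mp hinv'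
  · intro p _ q _ hpq
    simp only [Prod.mk.injEq] at hpq
    exact Prod.ext (x⁻¹.injective hpq.1) (x⁻¹.injective hpq.2)

lemma chain_last {h : ℕ} :
    ∀ (M : List (Equiv.Perm (Fin h))) (a z : Equiv.Perm (Fin h)),
      M.Chain' (fun a b => permLen b < permLen a) → M.head? = some a →
      M.getLast? = some z → z = a ∨ permLen z < permLen a := by
  intro M
  induction M with
  | nil => intro a z _ h1 _; simp at h1
  | cons b t IH =>
    intro a z hch hhead hlast
    simp only [List.head?_cons, Option.some.injEq] at hhead
    subst hhead
    cases t with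
    | nil =>
      simp only [List.getLast?_singleton, Option.some.injEq] at hlast
      exact Or.inl hlast.symm
    | cons b' t' =>
      rw [List.Chain', List.isChain_cons_cons] at hch
      rw [List.getLast?_cons_cons] at hlast
      have := IH b' z hch.2 (by simp) hlast
      rcases this with rfl | hlt
      · exact Or.inr hch.1
      · exact Or.inr (lt_trans hlt hch.1)
end

end

/-- let `h = c + d`, `c, d ≥ 1`, and let `x` be the permutation
`x(i) = i + d` for `i ≤ c`, `x(i) = i − c` otherwise, `θ(u) = x u x⁻¹`. If
`w, w' ∈ ^J W` satisfy `ℓ(w') = ℓ(w) − 1` and `u₀⁻¹ w' θ(u₀) ≤ w` (Bruhat order)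
for some `u₀ ∈ W_J`, then there exist `v ∈ S_h` and `u ∈ W_J` with (i) `v = w s` for a
transposition `s`, (ii) `ℓ(v) = ℓ(w) − 1`, and (iii) `w' = u v θ(u⁻¹)`. -/
theorem statement16 (c d : ℕ) (hc : 1 ≤ c) (hd : 1 ≤ d)
    (x : Equiv.Perm (Fin (c + d)))
    (hx : ∀ i : Fin (c + d),
      (x i : ℕ) = if (i : ℕ) < c then (i : ℕ) + d else (i : ℕ) - c)
    (w w' : Equiv.Perm (Fin (c + d)))
    (hw : memJW c d w) (hw' : memJW c d w')
    (hlen : (permLen w' : ℤ) = (permLen w : ℤ) - 1)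
    (u0 : Equiv.Perm (Fin (c + d))) (hu0 : memWJ c d u0)
    (hbruhat : BruhatLE (u0⁻¹ * w' * (x * u0 * x⁻¹)) w) :
    ∃ v u : Equiv.Perm (Fin (c + d)), memWJ c d u ∧
      (∃ s : Equiv.Perm (Fin (c + d)), IsTransposition s ∧ v = w * s) ∧
      (permLen v : ℤ) = (permLen w : ℤ) - 1 ∧
      w' = u * v * (x * u⁻¹ * x⁻¹) := by
  classical
  set y : Equiv.Perm (Fin (c + d)) := u0⁻¹ * w' * (x * u0 * x⁻¹) with hy
  have hu0inv : memWJ c d u0⁻¹ := memWJ_inv hu0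
  have hnoSBw' := noSB_of_memJW hw'
  have hnoSBw := noSB_of_memJW hw
  have hlen' : permLen w' + 1 = permLen w := by omega
  -- Step 1 : permLen w' ≤ permLen y
  have step1 : permLen w' ≤ permLen y := by
    have h1 : permLen (u0⁻¹ * w') = permLen u0⁻¹ + permLen w' :=
      permLen_additive hu0inv hnoSBw'
    have h2 : u0⁻¹ * w' = y * (x * u0⁻¹ * x⁻¹) := by
      rw [hy]; group
    have h3 : permLen (y * (x * u0⁻¹ * x⁻¹)) ≤ permLen y + permLen (x * u0⁻¹ * x⁻¹) :=
      permLen_mul_le _ _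
    have h4 : permLen (x * u0⁻¹ * x⁻¹) ≤ permLen u0⁻¹ := permLen_theta_le hu0inv x hx
    rw [← h2, h1] at h3
    omega
  -- Step 2 : y ≠ w
  have step2 : y ≠ w := by
    intro hyw
    have hrel : u0 * w = w' * (x * u0 * x⁻¹) := by
      have : u0 * y * (x * u0⁻¹ * x⁻¹) = w' := by rw [hy]; group
      rw [hyw] at this
      rw [← this]; group
    have h1 : permLen (u0 * w) = permLen u0 + permLen w := permLen_additive hu0 hnoSBw
    have h2 : permLen (w' * (x * u0 * x⁻¹)) ≤ permLen w' + permLen (x * u0 * x⁻¹) :=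
      permLen_mul_le _ _
    have h3 : permLen (x * u0 * x⁻¹) ≤ permLen u0 := permLen_theta_le hu0 x hx
    rw [← hrel, h1] at h2
    omega
  -- Step 3 : analyze the chain
  obtain ⟨L, hhead, hlast, hch⟩ := hbruhat
  rcases L with _ | ⟨a, rest⟩
  · simp at hhead
  simp only [List.head?_cons, Option.some.injEq] at hhead
  subst hhead
  rcases rest with _ | ⟨v, t⟩
  · simp only [List.getLast?_singleton, Option.some.injEq] at hlast
    exact absurd hlast.symm step2
  rw [List.Chain', List.isChain_cons_cons] at hch
  obtain ⟨⟨⟨tp, htp, hv⟩, hltv⟩, hch2⟩ := hch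
  rw [List.getLast?_cons_cons] at hlast
  have hch2' : (v :: t).Chain' (fun a b => permLen b < permLen a) :=
    List.IsChain.imp (fun a b hab => hab.2) hch2
  have hvy := chain_last (v :: t) v y hch2' (by simp) hlast
  have hyv : y = v := by
    rcases hvy with rfl | hlt
    · rfl
    · omega
  refine ⟨y, u0, hu0, ⟨tp, htp, by rw [hyv]; exact hv⟩, ?_, ?_⟩
  · have : permLen y = permLen v := by rw [hyv]
    omega
  · rw [hy]; group
end
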